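/- arXiv:1709.08051 — 2 statements merged into one kernel-verified Lean document; each statement's English description precedes it below -/
import Mathlib

section
/- Let (R, ·, 𝔢) be a symmetric partial A-module algebra over a regular multiplier Hopf algebra A such that A·R has nondegenerate product. Then A·R = 𝔢(A)R and A·R = R𝔢(A) (where 𝔢(A)R and R𝔢(A) denote the linear spans of products 𝔢(a)x and x𝔢(a) respectively). -/
/- ## Preliminaries: multiplier algebras and (regular) multiplier Hopf algebras -/

open scoped TensorProduct
open TensorProduct LinearMap
set_option linter.unusedSectionVars false

noncomputable section

variable (k : Type*) [Field k]

section MultiplierAlgebra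

variable (A : Type*) [NonUnitalRing A] [Module k A] [SMulCommClass k A A] [IsScalarTower k A A]

/-- The product of an algebra is *nondegenerate*. -/
def NondegProd : Prop :=
  (∀ a : A, (∀ b : A, a * b = 0) → a = 0) ∧ ∀ b : A, (∀ a : A, a * b = 0) → b = 0

/-- A multiplier of `A`: a pair `(U, V)` of linear maps with `U (a*b) = U a * b`,
`V (a*b) = a * V b` and `V a * b = a * U b`. -/
@[ext] structure Multiplier where
  U : A →ₗ[k] A
  V : A →ₗ[k] A
  U_mul : ∀ a b : A, U (a * b) = U a * b
  V_mul : ∀ a b : A, V (a * b) = a * V b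
  compat : ∀ a b : A, V a * b = a * U b

namespace Multiplier

variable {k A}

instance : Zero (Multiplier k A) := ⟨⟨0, 0, by simp, by simp, by simp⟩⟩
instance : Add (Multiplier k A) :=
  ⟨fun m n => ⟨m.U + n.U, m.V + n.V,
    by simp [m.U_mul, n.U_mul, add_mul],
    by simp [m.V_mul, n.V_mul, mul_add],
    by simp [add_mul, mul_add, m.compat, n.compat]⟩⟩
instance : Neg (Multiplier k A) :=
  ⟨fun m => ⟨-m.U, -m.V, by simp [m.U_mul], by simp [m.V_mul],
    by simp [m.compat]⟩⟩
instance : SMul k (Multiplier k A) :=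
  ⟨fun c m => ⟨c • m.U, c • m.V,
    by simp [m.U_mul, smul_mul_assoc],
    by simp [m.V_mul, mul_smul_comm],
    by simp [smul_mul_assoc, mul_smul_comm, m.compat]⟩⟩

@[simp] lemma zero_U : (0 : Multiplier k A).U = 0 := rfl
@[simp] lemma zero_V : (0 : Multiplier k A).V = 0 := rfl
@[simp] lemma add_U (m n : Multiplier k A) : (m + n).U = m.U + n.U := rfl
@[simp] lemma add_V (m n : Multiplier k A) : (m + n).V = m.V + n.V := rfl
@[simp] lemma neg_U (m : Multiplier k A) : (-m).U = -m.U := rfl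
@[simp] lemma neg_V (m : Multiplier k A) : (-m).V = -m.V := rfl
@[simp] lemma smul_U (c : k) (m : Multiplier k A) : (c • m).U = c • m.U := rfl
@[simp] lemma smul_V (c : k) (m : Multiplier k A) : (c • m).V = c • m.V := rfl

instance : AddCommGroup (Multiplier k A) where
  add_assoc a b c := by ext x <;> simp [add_assoc]
  zero_add a := by ext x <;> simp
  add_zero a := by ext x <;> simp
  add_comm a b := by ext x <;> simp [add_comm]
  neg_add_cancel a := by ext x <;> simp
  nsmul := nsmulRec
  zsmul := zsmulRec

instance : Module k (Multiplier k A) where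
  one_smul m := by ext x <;> simp
  mul_smul c d m := by ext x <;> simp [mul_smul]
  smul_zero c := by ext x <;> simp
  smul_add c m n := by ext x <;> simp
  add_smul c d m := by ext x <;> simp [add_smul]
  zero_smul m := by ext x <;> simp

instance : One (Multiplier k A) := ⟨⟨LinearMap.id, LinearMap.id, by simp, by simp, by simp⟩⟩
instance : Mul (Multiplier k A) :=
  ⟨fun m n => ⟨m.U ∘ₗ n.U, n.V ∘ₗ m.V,
    by simp [n.U_mul, m.U_mul],
    by simp [m.V_mul, n.V_mul],
    by intro a b; simp only [LinearMap.comp_apply]; rw [n.compat, m.compat]⟩⟩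

@[simp] lemma one_U : (1 : Multiplier k A).U = LinearMap.id := rfl
@[simp] lemma one_V : (1 : Multiplier k A).V = LinearMap.id := rfl
@[simp] lemma mul_U (m n : Multiplier k A) : (m * n).U = m.U ∘ₗ n.U := rfl
@[simp] lemma mul_V (m n : Multiplier k A) : (m * n).V = n.V ∘ₗ m.V := rfl

instance : Monoid (Multiplier k A) where
  mul_assoc a b c := by ext x <;> simp
  one_mul a := by ext x <;> simp
  mul_one a := by ext x <;> simp

/-- The canonical map `A → M(A)` given by left and right multiplication. -/
def incl (a : A) : Multiplier k A :=
  ⟨LinearMap.mulLeft k a, LinearMap.mulRight k a,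
    fun b c => by simp [mul_assoc], fun b c => by simp [mul_assoc],
    fun b c => by simp [mul_assoc]⟩

@[simp] lemma incl_U (a b : A) : (incl (k := k) a).U b = a * b := rfl
@[simp] lemma incl_V (a b : A) : (incl (k := k) a).V b = b * a := rfl

/-- The canonical map `A → M(A)` as a linear map. -/
def inclL : A →ₗ[k] Multiplier k A where
  toFun := incl
  map_add' a b := by ext x <;> simp [add_mul, mul_add]
  map_smul' c a := by ext x <;> simp [smul_mul_assoc, mul_smul_comm]

@[simp] lemma inclL_apply (a : A) : (inclL (k := k) a) = incl a := rfl

/-- The `U`-component, as a linear map. -/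
def Ulm : Multiplier k A →ₗ[k] A →ₗ[k] A where
  toFun m := m.U
  map_add' _ _ := rfl
  map_smul' _ _ := rfl

/-- The `V`-component, as a linear map. -/
def Vlm : Multiplier k A →ₗ[k] A →ₗ[k] A where
  toFun m := m.V
  map_add' _ _ := rfl
  map_smul' _ _ := rfl

end Multiplier

end MultiplierAlgebra

section Tensor

variable (R : Type*) [NonUnitalRing R] [Module k R] [SMulCommClass k R R] [IsScalarTower k R R]
variable (A : Type*) [NonUnitalRing A] [Module k A] [SMulCommClass k A A] [IsScalarTower k A A]

/-- The multiplier `1 ⊗ a` of `R ⊗ A`. -/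
def oneT (a : A) : Multiplier k (R ⊗[k] A) where
  U := lTensor R (LinearMap.mulLeft k a)
  V := lTensor R (LinearMap.mulRight k a)
  U_mul u v := by
    induction u with
    | zero => simp
    | add u₁ u₂ h₁ h₂ => simp [add_mul, h₁, h₂]
    | tmul x b =>
      induction v with
      | zero => simp
      | add v₁ v₂ h₁ h₂ => simp [mul_add, h₁, h₂]
      | tmul y c => simp [Algebra.TensorProduct.tmul_mul_tmul, mul_assoc]
  V_mul u v := by
    induction u with
    | zero => simp
    | add u₁ u₂ h₁ h₂ => simp [add_mul, h₁, h₂]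
    | tmul x b =>
      induction v with
      | zero => simp
      | add v₁ v₂ h₁ h₂ => simp [mul_add, h₁, h₂]
      | tmul y c => simp [Algebra.TensorProduct.tmul_mul_tmul, mul_assoc]
  compat u v := by
    induction u with
    | zero => simp
    | add u₁ u₂ h₁ h₂ => simp [add_mul, h₁, h₂]
    | tmul x b =>
      induction v with
      | zero => simp
      | add v₁ v₂ h₁ h₂ => simp only [map_add, mul_add, h₁, h₂]
      | tmul y c => simp [Algebra.TensorProduct.tmul_mul_tmul, mul_assoc]

/-- The multiplier `x ⊗ 1` of `R ⊗ A`. -/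
def tOne (x : R) : Multiplier k (R ⊗[k] A) where
  U := rTensor A (LinearMap.mulLeft k x)
  V := rTensor A (LinearMap.mulRight k x)
  U_mul u v := by
    induction u with
    | zero => simp
    | add u₁ u₂ h₁ h₂ => simp [add_mul, h₁, h₂]
    | tmul y b =>
      induction v with
      | zero => simp
      | add v₁ v₂ h₁ h₂ => simp [mul_add, h₁, h₂]
      | tmul z c => simp [Algebra.TensorProduct.tmul_mul_tmul, mul_assoc]
  V_mul u v := by
    induction u with
    | zero => simp
    | add u₁ u₂ h₁ h₂ => simp [add_mul, h₁, h₂]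
    | tmul y b =>
      induction v with
      | zero => simp
      | add v₁ v₂ h₁ h₂ => simp [mul_add, h₁, h₂]
      | tmul z c => simp [Algebra.TensorProduct.tmul_mul_tmul, mul_assoc]
  compat u v := by
    induction u with
    | zero => simp
    | add u₁ u₂ h₁ h₂ => simp [add_mul, h₁, h₂]
    | tmul y b =>
      induction v with
      | zero => simp
      | add v₁ v₂ h₁ h₂ => simp only [map_add, mul_add, h₁, h₂]
      | tmul z c => simp [Algebra.TensorProduct.tmul_mul_tmul, mul_assoc]

/-- The multiplier `m ⊗ a` of `R ⊗ A`, for `m ∈ M(R)`, `a ∈ A`. -/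
def mtensor (m : Multiplier k R) (a : A) : Multiplier k (R ⊗[k] A) where
  U := map m.U (LinearMap.mulLeft k a)
  V := map m.V (LinearMap.mulRight k a)
  U_mul u v := by
    induction u with
    | zero => simp
    | add u₁ u₂ h₁ h₂ => simp [add_mul, h₁, h₂]
    | tmul y b =>
      induction v with
      | zero => simp
      | add v₁ v₂ h₁ h₂ => simp [mul_add, h₁, h₂]
      | tmul z c => simp [Algebra.TensorProduct.tmul_mul_tmul, mul_assoc, m.U_mul]
  V_mul u v := by
    induction u with
    | zero => simp
    | add u₁ u₂ h₁ h₂ => simp [add_mul, h₁, h₂]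
    | tmul y b =>
      induction v with
      | zero => simp
      | add v₁ v₂ h₁ h₂ => simp [mul_add, h₁, h₂]
      | tmul z c => simp [Algebra.TensorProduct.tmul_mul_tmul, mul_assoc, m.V_mul]
  compat u v := by
    induction u with
    | zero => simp
    | add u₁ u₂ h₁ h₂ => simp [add_mul, h₁, h₂]
    | tmul y b =>
      induction v with
      | zero => simp
      | add v₁ v₂ h₁ h₂ => simp only [map_add, mul_add, h₁, h₂]
      | tmul z c => simp [Algebra.TensorProduct.tmul_mul_tmul, mul_assoc, m.compat]

/-- The multiplier `m ⊗ 1` of `R ⊗ A`, for `m ∈ M(R)`. -/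
def mtensorOne (m : Multiplier k R) : Multiplier k (R ⊗[k] A) where
  U := map m.U LinearMap.id
  V := map m.V LinearMap.id
  U_mul u v := by
    induction u with
    | zero => simp
    | add u₁ u₂ h₁ h₂ => simp [add_mul, h₁, h₂]
    | tmul y b =>
      induction v with
      | zero => simp
      | add v₁ v₂ h₁ h₂ => simp [mul_add, h₁, h₂]
      | tmul z c => simp [Algebra.TensorProduct.tmul_mul_tmul, m.U_mul]
  V_mul u v := by
    induction u with
    | zero => simp
    | add u₁ u₂ h₁ h₂ => simp [add_mul, h₁, h₂]
    | tmul y b =>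
      induction v with
      | zero => simp
      | add v₁ v₂ h₁ h₂ => simp [mul_add, h₁, h₂]
      | tmul z c => simp [Algebra.TensorProduct.tmul_mul_tmul, m.V_mul]
  compat u v := by
    induction u with
    | zero => simp
    | add u₁ u₂ h₁ h₂ => simp [add_mul, h₁, h₂]
    | tmul y b =>
      induction v with
      | zero => simp
      | add v₁ v₂ h₁ h₂ => simp only [map_add, mul_add, h₁, h₂]
      | tmul z c => simp [Algebra.TensorProduct.tmul_mul_tmul, m.compat]

/-- Apply a functional to the second tensor factor:  `x ⊗ a ↦ f a • x`. -/
def apT (f : A →ₗ[k] k) : R ⊗[k] A →ₗ[k] R :=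
  (TensorProduct.rid k R).toLinearMap ∘ₗ lTensor R f

@[simp] lemma apT_tmul (f : A →ₗ[k] k) (x : R) (a : A) :
    apT k R A f (x ⊗ₜ a) = f a • x := rfl

/-- Sum of pure tensors attached to a list of pairs. -/
def psum {M N : Type*} [AddCommGroup M] [Module k M] [AddCommGroup N] [Module k N]
    (l : List (M × N)) : M ⊗[k] N :=
  (l.map fun p => p.1 ⊗ₜ[k] p.2).sum

end Tensor
section MHAdef

variable (A : Type*) [NonUnitalRing A] [Module k A] [SMulCommClass k A A] [IsScalarTower k A A]

/-- Apply a functional to the first tensor factor: `a ⊗ b ↦ f a • b`. -/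
def apF (f : A →ₗ[k] k) : A ⊗[k] A →ₗ[k] A :=
  (TensorProduct.lid k A).toLinearMap ∘ₗ rTensor A f

@[simp] lemma apF_tmul (f : A →ₗ[k] k) (a b : A) : apF k A f (a ⊗ₜ b) = f a • b := rfl

/-- A *regular multiplier Hopf algebra* structure on a nondegenerate algebra `A`:
a comultiplication `Δ : A → M(A ⊗ A)` such that the four Galois-type maps
`T1 : a ⊗ b ↦ Δ(a)(1 ⊗ b)`, `T2 : a ⊗ b ↦ (a ⊗ 1)Δ(b)`, `T3 : a ⊗ b ↦ Δ(a)(b ⊗ 1)`,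
`T4 : a ⊗ b ↦ (1 ⊗ b)Δ(a)` are (well-defined and) bijective from `A ⊗ A` onto `A ⊗ A`,
together with its counit `ε` and (bijective) antipode `S`, subject to the usual axioms
(coassociativity and the counit and antipode laws, in their `T1`/`T2`-covered form). -/
structure MHA where
  nondeg : NondegProd A
  comul : A →ₗ[k] Multiplier k (A ⊗[k] A)
  comul_mul : ∀ a b : A, comul (a * b) = comul a * comul b
  T1 : A ⊗[k] A ≃ₗ[k] A ⊗[k] A
  T2 : A ⊗[k] A ≃ₗ[k] A ⊗[k] A
  T3 : A ⊗[k] A ≃ₗ[k] A ⊗[k] A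
  T4 : A ⊗[k] A ≃ₗ[k] A ⊗[k] A
  hT1 : ∀ a b : A, comul a * oneT k A A b = Multiplier.incl (T1 (a ⊗ₜ b))
  hT2 : ∀ a b : A, tOne k A A a * comul b = Multiplier.incl (T2 (a ⊗ₜ b))
  hT3 : ∀ a b : A, comul a * tOne k A A b = Multiplier.incl (T3 (a ⊗ₜ b))
  hT4 : ∀ a b : A, oneT k A A b * comul a = Multiplier.incl (T4 (a ⊗ₜ b))
  coassoc : ∀ a b c : A,
    (TensorProduct.assoc k A A A)
        ((rTensor A (T2.toLinearMap ∘ₗ TensorProduct.mk k A A a)) (T1 (b ⊗ₜ c)))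
      = (lTensor A (T1.toLinearMap ∘ₗ (TensorProduct.mk k A A).flip c)) (T2 (a ⊗ₜ b))
  counit : A →ₗ[k] k
  counit_mul : ∀ a b : A, counit (a * b) = counit a * counit b
  hcounit1 : ∀ a b : A, apF k A counit (T1 (a ⊗ₜ b)) = a * b
  hcounit2 : ∀ a b : A, apT k A A counit (T2 (a ⊗ₜ b)) = a * b
  S : A ≃ₗ[k] A
  S_antimul : ∀ a b : A, S (a * b) = S b * S a
  hS1 : ∀ a b : A, LinearMap.mul' k A ((rTensor A S.toLinearMap) (T1 (a ⊗ₜ b))) = counit a • b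
  hS2 : ∀ a b : A, LinearMap.mul' k A ((lTensor A S.toLinearMap) (T2 (a ⊗ₜ b))) = counit b • a

end MHAdef

section PComod

variable {k}
variable {A : Type*} [NonUnitalRing A] [Module k A] [SMulCommClass k A A] [IsScalarTower k A A]
variable (H : MHA k A)
variable (R : Type*) [NonUnitalRing R] [Module k R] [SMulCommClass k R R] [IsScalarTower k R R]

/-- `(R, ρ, E)` is a *partial `A`-comodule algebra* (Definition 3.5).  The data
`rmap`/`lmap` records the elements `ρ(x)(1 ⊗ a)` and `(1 ⊗ a)ρ(x)` of `R ⊗ A`.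
Condition `c3` is the coassociativity
`(ρ ⊗ ι)(ρ(x)) = (E ⊗ 1)(ι ⊗ Δ)(ρ(x))` in its fully covered form
`x⁽⁰⁾⁽⁰⁾ ⊗ x⁽⁰⁾⁽¹⁾a ⊗ x⁽¹⁾b = Σᵢ E(x⁽⁰⁾ ⊗ (x⁽¹⁾aᵢ)₍₁₎) ⊗ (x⁽¹⁾aᵢ)₍₂₎bᵢ`
for any representation `Σᵢ aᵢ ⊗ bᵢ = T1⁻¹(a ⊗ b)`. -/
structure IsPComod (ρ : R →ₗ[k] Multiplier k (R ⊗[k] A)) (E : Multiplier k (R ⊗[k] A))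
    (rmap : R →ₗ[k] A →ₗ[k] R ⊗[k] A) (lmap : A →ₗ[k] R →ₗ[k] R ⊗[k] A) : Prop where
  ρ_mul : ∀ x y : R, ρ (x * y) = ρ x * ρ y
  ρ_inj : Function.Injective ρ
  E_idem : E * E = E
  hrmap : ∀ (x : R) (a : A), ρ x * oneT k R A a = Multiplier.incl (rmap x a)
  hlmap : ∀ (a : A) (x : R), oneT k R A a * ρ x = Multiplier.incl (lmap a x)
  c1l : ∀ a : A, ∃ l : List (Multiplier k R × A),
      oneT k R A a * E = (l.map fun p => mtensor k R A p.1 p.2).sum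
  c1r : ∀ a : A, ∃ l : List (Multiplier k R × A),
      E * oneT k R A a = (l.map fun p => mtensor k R A p.1 p.2).sum
  c2l : ∀ (x : R) (a : A), ∃ u : R ⊗[k] A, rmap x a = E.U u
  c2r : ∀ (a : A) (x : R), ∃ u : R ⊗[k] A, lmap a x = E.V u
  c3 : ∀ (x : R) (a b : A) (l : List (A × A)), psum k l = H.T1.symm (a ⊗ₜ b) →
      rTensor A (rmap.flip a) (rmap x b)
        = (l.map fun p => (rTensor A E.U) ((TensorProduct.assoc k R A A).symm
            ((lTensor R (H.T1.toLinearMap ∘ₗ (TensorProduct.mk k A A).flip p.2))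
              (rmap x p.1)))).sum

/-- A *symmetric* partial `A`-comodule algebra (Definition 3.5 (iv)):  additionally
`(ρ ⊗ ι)(ρ(x)) = (ι ⊗ Δ)(ρ(x))(E ⊗ 1)`, in the fully covered form
`x⁽⁰⁾⁽⁰⁾ ⊗ ax⁽⁰⁾⁽¹⁾ ⊗ bx⁽¹⁾ = Σᵢ (x⁽⁰⁾ ⊗ (aᵢx⁽¹⁾)₍₁₎)E ⊗ bᵢ(aᵢx⁽¹⁾)₍₂₎` for any
representation `Σᵢ aᵢ ⊗ bᵢ = T4⁻¹(a ⊗ b)`. -/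
structure IsSymPComod (ρ : R →ₗ[k] Multiplier k (R ⊗[k] A)) (E : Multiplier k (R ⊗[k] A))
    (rmap : R →ₗ[k] A →ₗ[k] R ⊗[k] A) (lmap : A →ₗ[k] R →ₗ[k] R ⊗[k] A)
    extends IsPComod H R ρ E rmap lmap : Prop where
  c4 : ∀ (x : R) (a b : A) (l : List (A × A)), psum k l = H.T4.symm (a ⊗ₜ b) →
      rTensor A (lmap a) (lmap b x)
        = (l.map fun p => (rTensor A E.V) ((TensorProduct.assoc k R A A).symm
            ((lTensor R (H.T4.toLinearMap ∘ₗ (TensorProduct.mk k A A).flip p.2))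
              (lmap p.1 x)))).sum

/-- `R` is a (global) right `A`-comodule algebra via `ρ` (Definition 3.1), with
`rmap`/`lmap` recording `ρ(x)(1 ⊗ a) ∈ R ⊗ A` and `(1 ⊗ a)ρ(x) ∈ R ⊗ A`;
coassociativity `(ρ ⊗ ι)ρ = (ι ⊗ Δ)ρ` is stated in its fully covered form. -/
structure IsComod (ρ : R →ₗ[k] Multiplier k (R ⊗[k] A))
    (rmap : R →ₗ[k] A →ₗ[k] R ⊗[k] A) (lmap : A →ₗ[k] R →ₗ[k] R ⊗[k] A) : Prop where
  ρ_mul : ∀ x y : R, ρ (x * y) = ρ x * ρ y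
  ρ_inj : Function.Injective ρ
  hrmap : ∀ (x : R) (a : A), ρ x * oneT k R A a = Multiplier.incl (rmap x a)
  hlmap : ∀ (a : A) (x : R), oneT k R A a * ρ x = Multiplier.incl (lmap a x)
  coassoc : ∀ (x : R) (a b : A) (l : List (A × A)), psum k l = H.T1.symm (a ⊗ₜ b) →
      rTensor A (rmap.flip a) (rmap x b)
        = (l.map fun p => (TensorProduct.assoc k R A A).symm
            ((lTensor R (H.T1.toLinearMap ∘ₗ (TensorProduct.mk k A A).flip p.2))
              (rmap x p.1))).sum

end PComod
section PMod

variable {k}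
variable {A : Type*} [NonUnitalRing A] [Module k A] [SMulCommClass k A A] [IsScalarTower k A A]
variable (H : MHA k A)
variable (R : Type*) [NonUnitalRing R] [Module k R] [SMulCommClass k R R] [IsScalarTower k R R]

/-- `(R, ⬝, 𝔢)` is a *partial `A`-module algebra* (Definition 4.5).  Sweedler
expressions are stated for arbitrary list representations of the corresponding
covered elements; e.g. condition (i) reads
`a ⬝ (x (b ⬝ y)) = Σᵢ (pᵢ ⬝ x)(qᵢ ⬝ y)` whenever `Σᵢ pᵢ ⊗ qᵢ = Δ(a)(1 ⊗ b) = T1(a ⊗ b)`,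
and in (ii) one uses the covering `a₍₁₎ ⊗ S(a₍₂₎)b = (ι ⊗ S)((1 ⊗ S⁻¹(b))Δ(a))`. -/
structure IsPModAlg (act : A →ₗ[k] R →ₗ[k] R) (e : A →ₗ[k] Multiplier k R) : Prop where
  cond1 : ∀ (a b : A) (x y : R) (l : List (A × A)), psum k l = H.T1 (a ⊗ₜ b) →
      act a (x * act b y) = (l.map fun p => act p.1 x * act p.2 y).sum
  cond2a : ∀ (a b : A) (x : R) (l : List (A × A)), psum k l = H.T4 (a ⊗ₜ H.S.symm b) →
      (e a).U (act b x) = (l.map fun p => act p.1 (act (H.S p.2) x)).sum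
  cond2b : ∀ (a : A) (x : R),
      (e a).U x ∈ Submodule.span k {z : R | ∃ (b : A) (y : R), z = act b y}
  cond3 : ∀ (la : List A) (lx : List R), ∃ b : A,
      (∀ a ∈ la, a * b = a ∧ b * a = a) ∧ ∀ a ∈ la, ∀ x ∈ lx, act a x = act a (act b x)
  cond4 : ∀ x : R, (∀ a : A, act a x = 0) → x = 0

/-- A *symmetric* partial `A`-module algebra (Definition 4.5 (v)-(vii)).  In (vi),
one uses the covering `a₍₂₎ ⊗ S⁻¹(a₍₁₎)b = σ((S⁻¹ ⊗ ι)((S(b) ⊗ 1)Δ(a)))`. -/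
structure IsSymPModAlg (act : A →ₗ[k] R →ₗ[k] R) (e : A →ₗ[k] Multiplier k R)
    extends IsPModAlg H R act e : Prop where
  cond5 : ∀ (a b : A) (x y : R) (l : List (A × A)), psum k l = H.T3 (a ⊗ₜ b) →
      act a (act b x * y) = (l.map fun p => act p.1 x * act p.2 y).sum
  cond6 : ∀ (a b : A) (x : R) (l : List (A × A)), psum k l = H.T2 (H.S b ⊗ₜ a) →
      (e a).V (act b x) = (l.map fun p => act p.2 (act (H.S.symm p.1) x)).sum
  cond7 : ∀ (a : A) (x : R),
      (e a).V x ∈ Submodule.span k {z : R | ∃ (b : A) (y : R), z = act b y}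

/-- `R` is a (global, unitary) left `A`-module algebra (Definition 4.1). -/
structure IsModAlg (act : A →ₗ[k] R →ₗ[k] R) : Prop where
  assoc : ∀ (a b : A) (x : R), act a (act b x) = act (a * b) x
  unital : Submodule.span k {z : R | ∃ (a : A) (x : R), z = act a x} = ⊤
  mul_cond : ∀ (a b : A) (x y : R) (l : List (A × A)), psum k l = H.T1 (a ⊗ₜ b) →
      act a (x * act b y) = (l.map fun p => act p.1 x * act p.2 y).sum

end PMod

section Dual

variable {k}
variable {A : Type*} [NonUnitalRing A] [Module k A] [SMulCommClass k A A] [IsScalarTower k A A]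
variable (H : MHA k A)
variable (Ahat : Type*) [NonUnitalRing Ahat] [Module k Ahat] [SMulCommClass k Ahat Ahat]
  [IsScalarTower k Ahat Ahat] (Hh : MHA k Ahat)

/-- A realization of the *dual* `Â = {φ(– a) : a ∈ A}` of a regular multiplier Hopf
algebra `A` with left integral `φ` (as in (2.1)): a regular multiplier Hopf algebra
`Â` together with the linear bijections `hat : a ↦ φ(– a)` and `hat' : b ↦ φ(b –)`,
the evaluation pairing `ev`, the product rule `(ŵ û)(c) = (w ⊗ u)(Δ c)`, the
coproduct rules (2.5) and (2.6) read through `hat`, and the modular element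
`δ ∈ M(A)` of (5.1), `(φ ⊗ ι)Δ(a) = φ(a)δ`. -/
structure DualPair where
  φ : A →ₗ[k] k
  φ_ne : φ ≠ 0
  /-- `(ι ⊗ φ)((b ⊗ 1)Δ(a)) = φ(a) b` : left invariance of the integral. -/
  φ_int : ∀ a b : A, apT k A A φ (H.T2 (b ⊗ₜ a)) = φ a • b
  /-- `(ι ⊗ φ)(Δ(a)(b ⊗ 1)) = φ(a) b` : left invariance of the integral. -/
  φ_int' : ∀ a b : A, apT k A A φ (H.T3 (a ⊗ₜ b)) = φ a • b
  hat : A ≃ₗ[k] Ahat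
  hat' : A ≃ₗ[k] Ahat
  ev : Ahat →ₗ[k] A →ₗ[k] k
  ev_hat : ∀ a x : A, ev (hat a) x = φ (x * a)
  ev_hat' : ∀ b x : A, ev (hat' b) x = φ (b * x)
  /-- the product of `Â`: `(φ(– a) u)(c) = Σ φ(c₍₁₎ a) u(c₍₂₎)`. -/
  ev_mul : ∀ (a : A) (u : Ahat) (c : A),
      ev (hat a * u) c
        = (TensorProduct.lid k k) ((map φ (ev u)) (H.T3 (c ⊗ₜ a)))
  /-- identity (2.5): `Δ̂(φ(– a))(1 ⊗ φ(– b)) = φ(– S⁻¹(b₍₁₎)a) ⊗ φ(– b₍₂₎)`,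
  read through `hat⁻¹ ⊗ hat⁻¹` and covered on the right leg by `c`. -/
  hatT1 : ∀ a b c : A,
      (lTensor A (LinearMap.mulRight k c))
          ((map hat.symm.toLinearMap hat.symm.toLinearMap) (Hh.T1 (hat a ⊗ₜ hat b)))
        = rTensor A (LinearMap.mulRight k a ∘ₗ H.S.symm.toLinearMap) (H.T1 (b ⊗ₜ c))
  /-- identity (2.6): `(ι ⊗ Ŝ)((1 ⊗ Ŝ⁻¹(φ(– b)))Δ̂(φ(– a))) = φ(– b₍₁₎a) ⊗ φ(– b₍₂₎)`,
  read through `hat⁻¹ ⊗ hat⁻¹` and covered on the right leg by `c`. -/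
  hatT2 : ∀ a b c : A,
      (lTensor A (LinearMap.mulRight k c))
          ((map hat.symm.toLinearMap hat.symm.toLinearMap)
            ((lTensor Ahat Hh.S.toLinearMap) (Hh.T4 (hat a ⊗ₜ Hh.S.symm (hat b)))))
        = rTensor A (LinearMap.mulRight k a) (H.T1 (b ⊗ₜ c))
  /-- the modular element `δ`, with `(φ ⊗ ι)(Δ(a)(1 ⊗ b)) = φ(a) • (δ b)`. -/
  delta : Multiplier k A
  deltaInv : Multiplier k A
  delta_inv : delta * deltaInv = 1 ∧ deltaInv * delta = 1
  hdelta : ∀ a b : A, apF k A φ (H.T1 (a ⊗ₜ b)) = φ a • delta.U b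

end Dual
section Statements
variable {k}
variable {A : Type*} [NonUnitalRing A] [Module k A] [SMulCommClass k A A] [IsScalarTower k A A]
variable {R : Type*} [NonUnitalRing R] [Module k R] [SMulCommClass k R R] [IsScalarTower k R R]

lemma exists_psum {M N : Type*} [AddCommGroup M] [Module k M] [AddCommGroup N] [Module k N]
    (u : M ⊗[k] N) : ∃ l : List (M × N), psum k l = u := by
  induction u with
  | zero => exact ⟨[], by simp [psum]⟩
  | tmul x y => exact ⟨[(x, y)], by simp [psum]⟩
  | add u v hu hv =>
    obtain ⟨l₁, h₁⟩ := hu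
    obtain ⟨l₂, h₂⟩ := hv
    exact ⟨l₁ ++ l₂, by simp [psum, ← h₁, ← h₂]⟩

lemma map_psum {M N P : Type*} [AddCommGroup M] [Module k M] [AddCommGroup N] [Module k N]
    [AddCommGroup P] [Module k P] (f : M ⊗[k] N →ₗ[k] P) (l : List (M × N)) :
    f (psum k l) = (l.map fun p => f (p.1 ⊗ₜ p.2)).sum := by
  simp [psum, map_list_sum, List.map_map, Function.comp_def]

/-- **Proposition 4.15.**  Let `(R, ·, 𝔢)` be a symmetric partial `A`-module algebra over
a regular multiplier Hopf algebra `A` such that `A·R` has nondegenerate product.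
Then `A·R = 𝔢(A)R` and `A·R = R𝔢(A)` (as linear spans). -/
theorem AR_eq_eA_R
    (H : MHA k A) (hR : NondegProd R)
    (act : A →ₗ[k] R →ₗ[k] R) (e : A →ₗ[k] Multiplier k R)
    (h : IsSymPModAlg H R act e)
    (hAR : (∀ u ∈ Submodule.span k {z : R | ∃ (a : A) (x : R), z = act a x},
              (∀ v ∈ Submodule.span k {z : R | ∃ (a : A) (x : R), z = act a x}, u * v = 0)
              → u = 0)
         ∧ ∀ v ∈ Submodule.span k {z : R | ∃ (a : A) (x : R), z = act a x},
              (∀ u ∈ Submodule.span k {z : R | ∃ (a : A) (x : R), z = act a x}, u * v = 0)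
              → v = 0) :
    Submodule.span k {z : R | ∃ (a : A) (x : R), z = act a x}
        = Submodule.span k {z : R | ∃ (a : A) (x : R), z = (e a).U x}
    ∧ Submodule.span k {z : R | ∃ (a : A) (x : R), z = act a x}
        = Submodule.span k {z : R | ∃ (a : A) (x : R), z = (e a).V x} := by
  classical
  constructor
  · apply le_antisymm
    · rw [Submodule.span_le]
      rintro z ⟨a, x, rfl⟩
      obtain ⟨b, hb, hbx⟩ := h.cond3 [a] [x]
      have hax : act a x = act a (act b x) := hbx a (by simp) x (by simp)
      obtain ⟨l, hl⟩ := exists_psum (H.T4.symm (a ⊗ₜ H.S.symm b))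
      set B : A ⊗[k] A →ₗ[k] R :=
        TensorProduct.lift (act.compl₂ ((act.flip x) ∘ₗ H.S.toLinearMap)) with hBdef
      have hB : ∀ p q : A, B (p ⊗ₜ q) = act p (act (H.S q) x) := fun p q => rfl
      have step : ∀ p ∈ l, (e p.1).U (act (H.S p.2) x)
          = (B ∘ₗ H.T4.toLinearMap) (p.1 ⊗ₜ p.2) := by
        intro p _
        obtain ⟨lp, hlp⟩ := exists_psum (H.T4 (p.1 ⊗ₜ p.2))
        have h2 := h.cond2a p.1 (H.S p.2) x lp (by
          rw [hlp, LinearEquiv.symm_apply_apply])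
        have hm := map_psum (k := k) (B ∘ₗ H.T4.toLinearMap) lp
        rw [h2]
        have : (lp.map fun q => act q.1 (act (H.S q.2) x)).sum = B (psum k lp) := by
          rw [map_psum (k := k) B lp]; simp only [hB]
        rw [this, hlp]
        rfl
      have total : act a x = (l.map fun p => (e p.1).U (act (H.S p.2) x)).sum := by
        rw [List.map_congr_left step, ← map_psum (k := k) (B ∘ₗ H.T4.toLinearMap) l, hl]
        simp only [LinearMap.comp_apply, LinearEquiv.coe_coe, LinearEquiv.apply_symm_apply]
        rw [hB, LinearEquiv.apply_symm_apply, hax]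
      rw [SetLike.mem_coe, total]
      apply list_sum_mem
      intro y hy
      obtain ⟨p, _, rfl⟩ := List.mem_map.mp hy
      exact Submodule.subset_span ⟨p.1, act (H.S p.2) x, rfl⟩
    · rw [Submodule.span_le]
      rintro z ⟨a, x, rfl⟩
      exact h.cond2b a x
  · apply le_antisymm
    · rw [Submodule.span_le]
      rintro z ⟨a, x, rfl⟩
      obtain ⟨b, hb, hbx⟩ := h.cond3 [a] [x]
      have hax : act a x = act a (act b x) := hbx a (by simp) x (by simp)
      obtain ⟨l, hl⟩ := exists_psum (H.T2.symm (H.S b ⊗ₜ a))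
      set B : A ⊗[k] A →ₗ[k] R :=
        TensorProduct.lift (act.flip ∘ₗ ((act.flip x) ∘ₗ H.S.symm.toLinearMap)) with hBdef
      have hB : ∀ p q : A, B (p ⊗ₜ q) = act q (act (H.S.symm p) x) := fun p q => rfl
      have step : ∀ p ∈ l, (e p.2).V (act (H.S.symm p.1) x)
          = (B ∘ₗ H.T2.toLinearMap) (p.1 ⊗ₜ p.2) := by
        intro p _
        obtain ⟨lp, hlp⟩ := exists_psum (H.T2 (p.1 ⊗ₜ p.2))
        have h6 := h.cond6 p.2 (H.S.symm p.1) x lp (by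
          rw [hlp, LinearEquiv.apply_symm_apply])
        rw [h6]
        have : (lp.map fun q => act q.2 (act (H.S.symm q.1) x)).sum = B (psum k lp) := by
          rw [map_psum (k := k) B lp]; simp only [hB]
        rw [this, hlp]
        rfl
      have total : act a x = (l.map fun p => (e p.2).V (act (H.S.symm p.1) x)).sum := by
        rw [List.map_congr_left step, ← map_psum (k := k) (B ∘ₗ H.T2.toLinearMap) l, hl]
        simp only [LinearMap.comp_apply, LinearEquiv.coe_coe, LinearEquiv.apply_symm_apply]
        rw [hB, LinearEquiv.symm_apply_apply, hax]
      rw [SetLike.mem_coe, total]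
      apply list_sum_mem
      intro y hy
      obtain ⟨p, _, rfl⟩ := List.mem_map.mp hy
      exact Submodule.subset_span ⟨p.2, act (H.S.symm p.1) x, rfl⟩
    · rw [Submodule.span_le]
      rintro z ⟨a, x, rfl⟩
      exact h.cond7 a x

end Statements
end
end

section
/- Let (R, ·, 𝔢) be a partial A-module algebra over a regular multiplier Hopf algebra A. Then the product of the smash product algebra R # A is left nondegenerate: if (x # a)(y # b) = 0 for all x # a ∈ R # A, then y # b = 0. -/
/- ## Preliminaries: multiplier algebras and (regular) multiplier Hopf algebras -/

open scoped TensorProduct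
open TensorProduct LinearMap
set_option linter.unusedSectionVars false

noncomputable section

variable (k : Type*) [Field k]

section Statements
variable {k}
variable {A : Type*} [NonUnitalRing A] [Module k A] [SMulCommClass k A A] [IsScalarTower k A A]
variable {R : Type*} [NonUnitalRing R] [Module k R] [SMulCommClass k R R] [IsScalarTower k R R]

set_option maxHeartbeats 1000000 in
/-- Left multiplication by `x # a` in the smash product algebra `R # A`
(Definition 5.1): `(x # a)(y # b) = x(a₍₁₎ · y) # a₍₂₎ b`. -/
def smashL (H : MHA k A) (act : A →ₗ[k] R →ₗ[k] R) (x : R) (a : A) :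
    R ⊗[k] A →ₗ[k] R ⊗[k] A :=
  TensorProduct.lift <| LinearMap.mk₂ k
    (fun y b => (map ((LinearMap.mulLeft k x) ∘ₗ (act.flip y)) (LinearMap.id (R := k) (M := A)))
      (H.T1 (a ⊗ₜ b)))
    (fun y₁ y₂ b => by
      have h : (LinearMap.mulLeft k x) ∘ₗ (act.flip (y₁ + y₂))
          = (LinearMap.mulLeft k x) ∘ₗ (act.flip y₁)
            + (LinearMap.mulLeft k x) ∘ₗ (act.flip y₂) := by
        rw [map_add, LinearMap.comp_add]
      rw [h, TensorProduct.map_add_left, LinearMap.add_apply])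
    (fun c y b => by
      have h : (LinearMap.mulLeft k x) ∘ₗ (act.flip (c • y))
          = c • ((LinearMap.mulLeft k x) ∘ₗ (act.flip y)) := by
        rw [map_smul, LinearMap.comp_smul]
      rw [h, TensorProduct.map_smul_left, LinearMap.smul_apply])
    (fun y b₁ b₂ => by rw [TensorProduct.tmul_add, map_add, map_add])
    (fun c y b => by rw [TensorProduct.tmul_smul, map_smul, map_smul])


/-! Write `(x # a) w = (x ⊗ 1)(Δ(a) w)`, where `Δ(a) w` is `smashAct H act a w`. Nondegeneracy
of `R` strips off `x ⊗ 1`, so `Δ(a) w = 0` for all `a`. Let `A ⊗ A` act on `R ⊗ A` by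
`(p ⊗ q) ⋆ (x ⊗ b) = (p · x) ⊗ q b`. Then `((1 ⊗ d)Δ(a)) ⋆ w = (1 ⊗ d)(Δ(a) w) = 0`, and since
the elements `(1 ⊗ d)Δ(a)` span `A ⊗ A` (bijectivity of `T4`), `(c ⊗ u) ⋆ w = 0` for all `c, u`.
Nondegeneracy of `A` on the second leg and condition (iv) on the first leg force `w = 0`. Both
stripping steps rest on one fact: over a field, an element of a tensor product killed on one leg
by a jointly injective family of maps is zero. -/

section TensorProductLemmas

variable {S M N P Q ι κ : Type*} [CommSemiring S] [AddCommMonoid M] [Module S M]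
  [AddCommMonoid N] [Module S N] [AddCommMonoid P] [Module S P] [AddCommMonoid Q] [Module S Q]

theorem TensorProduct.eq_zero_of_forall_rTensor_eq_zero [Module.Free S N] (φ : ι → M →ₗ[S] P)
    (hφ : ∀ m, (∀ i, φ i m = 0) → m = 0) {Y : M ⊗[S] N} (hY : ∀ i, rTensor N (φ i) Y = 0) :
    Y = 0 := by
  classical
  let b := Module.Free.chooseBasis S N
  have hcoord : ∀ (f : M →ₗ[S] P) (Z : M ⊗[S] N) j,
      equivFinsuppOfBasisRight b (rTensor N f Z) j = f (equivFinsuppOfBasisRight b Z j) := by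
    intro f Z j
    induction Z using TensorProduct.induction_on with
    | zero => simp
    | tmul m n => simp
    | add Z₁ Z₂ h₁ h₂ => simp [h₁, h₂]
  refine (equivFinsuppOfBasisRight b).map_eq_zero_iff.mp (Finsupp.ext fun j => hφ _ fun i => ?_)
  rw [← hcoord, hY i, map_zero, Finsupp.zero_apply]

theorem TensorProduct.eq_zero_of_forall_lTensor_eq_zero [Module.Free S M] (ψ : ι → N →ₗ[S] Q)
    (hψ : ∀ n, (∀ i, ψ i n = 0) → n = 0) {Y : M ⊗[S] N} (hY : ∀ i, lTensor M (ψ i) Y = 0) :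
    Y = 0 := by
  have := eq_zero_of_forall_rTensor_eq_zero ψ hψ (Y := TensorProduct.comm S M N Y) fun i => by
    rw [rTensor_comm, hY i, map_zero]
  exact (TensorProduct.comm S M N).map_eq_zero_iff.mp this

theorem TensorProduct.eq_zero_of_forall_map_eq_zero [Module.Free S M] [Module.Free S Q]
    (φ : ι → M →ₗ[S] P) (ψ : κ → N →ₗ[S] Q) (hφ : ∀ m, (∀ i, φ i m = 0) → m = 0)
    (hψ : ∀ n, (∀ j, ψ j n = 0) → n = 0) {Y : M ⊗[S] N} (hY : ∀ i j, map (φ i) (ψ j) Y = 0) :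
    Y = 0 :=
  eq_zero_of_forall_lTensor_eq_zero ψ hψ fun j =>
    eq_zero_of_forall_rTensor_eq_zero φ hφ fun i => by
      rw [← LinearMap.comp_apply, rTensor_comp_lTensor, hY]

theorem TensorProduct.map₂_apply_tmul_right {M' N' : Type*} [AddCommMonoid M'] [Module S M']
    [AddCommMonoid N'] [Module S N'] (f : M →ₗ[S] P →ₗ[S] M') (g : N →ₗ[S] Q →ₗ[S] N')
    (V : M ⊗[S] N) (x : P) (y : Q) : map₂ f g V (x ⊗ₜ y) = map (f.flip x) (g.flip y) V := by
  induction V using TensorProduct.induction_on with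
  | zero => simp
  | tmul m n => simp
  | add V₁ V₂ h₁ h₂ => simp [h₁, h₂]

end TensorProductLemmas

section Nondegenerate

variable {B C : Type*} [NonUnitalRing B] [Module k B] [SMulCommClass k B B] [IsScalarTower k B B]
  [NonUnitalRing C] [Module k C] [SMulCommClass k C C] [IsScalarTower k C C]

theorem TensorProduct.tmul_mul_eq_map_mulLeft (p : B) (q : C) (Z : B ⊗[k] C) :
    (p ⊗ₜ[k] q) * Z = map (LinearMap.mulLeft k p) (LinearMap.mulLeft k q) Z := by
  induction Z using TensorProduct.induction_on with
  | zero => simp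
  | tmul r s => simp [Algebra.TensorProduct.tmul_mul_tmul]
  | add Z₁ Z₂ h₁ h₂ => simp [mul_add, h₁, h₂]

theorem TensorProduct.eq_zero_of_forall_mul_eq_zero
    (hB : ∀ b : B, (∀ a : B, a * b = 0) → b = 0) (hC : ∀ c : C, (∀ a : C, a * c = 0) → c = 0)
    {Z : B ⊗[k] C} (hZ : ∀ u, u * Z = 0) : Z = 0 :=
  eq_zero_of_forall_map_eq_zero (LinearMap.mulLeft k) (LinearMap.mulLeft k) hB hC fun p q => by
    rw [← tmul_mul_eq_map_mulLeft, hZ]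

theorem Multiplier.V_eq_U_of_incl_mul_eq_mul_incl (hB : ∀ b : B, (∀ a : B, a * b = 0) → b = 0)
    {m n : Multiplier k B} {X Y : B} (h : incl X * m = n * incl Y) : m.V X = n.U Y := by
  have hu : ∀ u, u * (m.V X - n.U Y) = 0 := fun u => by
    have := congrArg (fun l : Multiplier k B => l.V u) h
    simp only [mul_V, LinearMap.comp_apply, incl_V, m.V_mul, n.compat] at this
    rw [mul_sub, this, sub_self]
  exact sub_eq_zero.mp (hB _ hu)

end Nondegenerate

theorem MHA.lTensor_mulRight_T4 (H : MHA k A) (a b d : A) :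
    lTensor A (LinearMap.mulRight k b) (H.T4 (a ⊗ₜ d))
      = lTensor A (LinearMap.mulLeft k d) (H.T1 (a ⊗ₜ b)) :=
  Multiplier.V_eq_U_of_incl_mul_eq_mul_incl (m := oneT k A A b) (n := oneT k A A d)
    (fun _ => eq_zero_of_forall_mul_eq_zero H.nondeg.2 H.nondeg.2)
    (by rw [← H.hT4, ← H.hT1, mul_assoc])

/-- `smashAct H act a (x ⊗ b) = (a₍₁₎ · x) ⊗ a₍₂₎ b`, so that
`(x # a) w = (x ⊗ 1) (smashAct H act a w)`. -/
def smashAct (H : MHA k A) (act : A →ₗ[k] R →ₗ[k] R) (a : A) : R ⊗[k] A →ₗ[k] R ⊗[k] A :=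
  rTensor A (lift act.flip) ∘ₗ (TensorProduct.assoc k R A A).symm.toLinearMap ∘ₗ
    lTensor R (H.T1.toLinearMap ∘ₗ TensorProduct.mk k A A a)

theorem smashAct_tmul (H : MHA k A) (act : A →ₗ[k] R →ₗ[k] R) (a : A) (x : R) (b : A) :
    smashAct H act a (x ⊗ₜ b) = rTensor A (act.flip x) (H.T1 (a ⊗ₜ b)) := by
  simp only [smashAct, LinearMap.comp_apply, lTensor_tmul, TensorProduct.mk_apply,
    LinearEquiv.coe_coe]
  induction H.T1 (a ⊗ₜ b) using TensorProduct.induction_on with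
  | zero => simp
  | tmul p q => simp
  | add V₁ V₂ h₁ h₂ => simp [tmul_add, h₁, h₂]

theorem smashL_eq_rTensor_comp_smashAct (H : MHA k A) (act : A →ₗ[k] R →ₗ[k] R) (x : R) (a : A) :
    smashL H act x a = rTensor A (LinearMap.mulLeft k x) ∘ₗ smashAct H act a :=
  TensorProduct.ext' fun y b => by
    rw [LinearMap.comp_apply, smashAct_tmul, ← rTensor_comp_apply]
    rfl

theorem map₂_T4_eq_lTensor_comp_smashAct (H : MHA k A) (act : A →ₗ[k] R →ₗ[k] R) (a d : A) :
    map₂ act (LinearMap.mul k A) (H.T4 (a ⊗ₜ d))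
      = lTensor R (LinearMap.mulLeft k d) ∘ₗ smashAct H act a :=
  TensorProduct.ext' fun x b => by
    have hflip : (LinearMap.mul k A).flip b = LinearMap.mulRight k b := rfl
    rw [map₂_apply_tmul_right, hflip, ← rTensor_comp_lTensor, LinearMap.comp_apply,
      H.lTensor_mulRight_T4, LinearMap.comp_apply, smashAct_tmul, ← LinearMap.comp_apply,
      ← LinearMap.comp_apply, rTensor_comp_lTensor, lTensor_comp_rTensor]

/-- **Proposition 5.2.**  If `(R, ·, 𝔢)` is a partial `A`-module algebra, then the
product of the smash product algebra `R # A` is left nondegenerate: if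
`(x # a) w = 0` for all `x # a ∈ R # A`, then `w = 0`. -/
theorem smash_product_left_nondegenerate
    (H : MHA k A) (hR : NondegProd R)
    (act : A →ₗ[k] R →ₗ[k] R) (e : A →ₗ[k] Multiplier k R)
    (h : IsPModAlg H R act e) :
    ∀ w : R ⊗[k] A, (∀ (x : R) (a : A), smashL H act x a w = 0) → w = 0 := by
  intro w hw
  have hσ : ∀ a, smashAct H act a w = 0 := fun a =>
    eq_zero_of_forall_rTensor_eq_zero (LinearMap.mulLeft k) hR.2 fun x => by
      rw [← LinearMap.comp_apply, ← smashL_eq_rTensor_comp_smashAct, hw]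
  have hT4 : (map₂ act (LinearMap.mul k A)).flip w ∘ₗ H.T4.toLinearMap = 0 :=
    TensorProduct.ext' fun a d => by
      simp only [LinearMap.comp_apply, LinearMap.flip_apply, LinearEquiv.coe_coe,
        map₂_T4_eq_lTensor_comp_smashAct, hσ, map_zero, LinearMap.zero_apply]
  have hV : ∀ V, map₂ act (LinearMap.mul k A) V w = 0 := fun V => by
    simpa using LinearMap.congr_fun hT4 (H.T4.symm V)
  exact eq_zero_of_forall_map_eq_zero act (LinearMap.mul k A) h.cond4 H.nondeg.2
    fun c u => hV (c ⊗ₜ u)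

end Statements
end
end
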